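/- arXiv:1712.06883 — 2 statements merged into one kernel-verified Lean document; each statement's English description precedes it below -/
import Mathlib

section
/- For every Ẽ < 0 there exists a constant C_Ẽ (independent of Λ and ω) with the following property: if Λ ⊂ ℤ^d is a finite box, E ≤ Ẽ is an eigenvalue of H_{ω,Λ}, and ψ ∈ ℓ²(Λ) is a corresponding eigenvector, then ‖ψ‖ ≤ C_Ẽ · ‖χ_{Λ∩Γ} ψ‖, where χ_{Λ∩Γ} denotes the coordinate projection onto the sites of Λ lying in Γ. -/
open MeasureTheory ENNReal Filter

noncomputable section

/-- Sites of the lattice `ℤ^d`. -/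
abbrev Site (d : ℕ) := Fin d → ℤ

/-- `n ∈ Γ = M ℤ^d`. -/
def inGamma (M : ℕ) {d : ℕ} (n : Site d) : Prop := ∀ i, (M : ℤ) ∣ n i

instance {M d : ℕ} : DecidablePred (inGamma M (d := d)) := fun _ =>
  Fintype.decidableForallFintype

/-- ℓ¹ (graph) distance on `ℤ^d`. -/
def dist1 {d : ℕ} (x y : Site d) : ℤ := ∑ i, |x i - y i|

/-- The sporadic random potential: `V_ω(n) = ω n` for `n ∈ Γ`, `0` otherwise. -/
def sporadicV (M : ℕ) {d : ℕ} (ω : Site d → ℝ) (n : Site d) : ℝ :=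
  if inGamma M n then ω n else 0

/-- The matrix of `H_ω = H_0 + λ V_ω` restricted to a finite set `Λ ⊂ ℤ^d`:
`H_{ω,Λ} = χ_Λ H_ω χ_Λ`. -/
def HBox {d : ℕ} (M : ℕ) (lam : ℝ) (ω : Site d → ℝ) (Λ : Finset (Site d)) :
    Matrix Λ Λ ℝ := fun x y =>
  if (x : Site d) = (y : Site d) then 2 * d + lam * sporadicV M ω x
  else if dist1 (x : Site d) (y : Site d) = 1 then -1 else 0

lemma HBox_isHermitian {d : ℕ} (M : ℕ) (lam : ℝ) (ω : Site d → ℝ) (Λ : Finset (Site d)) :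
    (HBox M lam ω Λ).IsHermitian := by
  ext x y
  simp only [HBox, Matrix.conjTranspose_apply, star_trivial]
  have h1 : ((y : Site d) = (x : Site d)) ↔ ((x : Site d) = (y : Site d)) := eq_comm
  have h2 : dist1 (y : Site d) (x : Site d) = dist1 (x : Site d) (y : Site d) := by
    unfold dist1; exact Finset.sum_congr rfl fun i _ => abs_sub_comm _ _
  by_cases h : (x : Site d) = (y : Site d)
  · simp [h, Subtype.ext h]
  · have h' : ¬((y : Site d) = (x : Site d)) := fun hh => h hh.symm
    simp [h, h', h2]

/-- The number of eigenvalues (counted with multiplicity) of a matrix in a set `I ⊆ ℝ`;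
for a Hermitian matrix this is `tr E_A(I)`. -/
def eigCount {n : Type*} [Fintype n] [DecidableEq n] (A : Matrix n n ℝ) (I : Set ℝ) : ℕ := by
  classical exact (A.charpoly.roots.filter (· ∈ I)).card

/-- The cube `Λ_L` of side length `L` centered at `0`: the points `x` with
`-L/2 < x ν ≤ L/2`; it contains `L^d` points. -/
def cube (d L : ℕ) : Finset (Site d) :=
  Finset.Icc (fun _ => (L : ℤ) / 2 - L + 1) (fun _ => (L : ℤ) / 2)

/-- `ℙ` makes the coordinates `(ω n)` i.i.d. with common distribution `μ`. -/
def IsIIDwith {d : ℕ} (ℙ : Measure (Site d → ℝ)) (μ : Measure ℝ) : Prop :=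
  IsProbabilityMeasure ℙ ∧
    ProbabilityTheory.iIndepFun (fun n (ω : Site d → ℝ) => ω n) ℙ ∧
    ∀ n : Site d, ℙ.map (fun ω => ω n) = μ

/-- The standing assumptions on the single–site distribution `μ`: it is a probability
measure with a bounded density and compact support, its support contains more than one
point, and `inf supp μ < 0`. -/
structure GoodMeasure (μ : Measure ℝ) : Prop where
  prob : IsProbabilityMeasure μ
  boundedDensity : ∃ ρ : ℝ → ℝ, (∀ x, 0 ≤ ρ x) ∧ (∃ B, ∀ x, ρ x ≤ B) ∧
    μ = volume.withDensity (fun x => ENNReal.ofReal (ρ x))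
  compactSupport : ∃ K : Set ℝ, IsCompact K ∧ μ Kᶜ = 0
  nontrivialSupport : ∃ x y : ℝ, x ≠ y ∧ (∀ ε > 0, 0 < μ (Metric.ball x ε)) ∧
    (∀ ε > 0, 0 < μ (Metric.ball y ε))
  negSupport : ∃ x < (0:ℝ), ∀ ε > 0, 0 < μ (Metric.ball x ε)

end
noncomputable section

/-!
Split an eigenvector `ψ = q + p` into its parts off and on `Γ`. Off `Γ` the potential
vanishes, so `H` acts on `q` as `2d - A` with `A` the adjacency matrix of the box, and
`‖A‖ ≤ 2d` by the Schur test since every site has `2d` neighbours. Hence `⟪q, (2d - A) q⟫ ≥ 0`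
and `E ‖q‖² = ⟪q, H ψ⟫ ≥ -⟪q, A p⟫ ≥ -2d ‖q‖ ‖p‖`, so `|Ẽ| ‖q‖ ≤ 2d ‖p‖` when `E ≤ Ẽ < 0`,
and `‖ψ‖² = ‖q‖² + ‖p‖² ≤ (1 + (2d/Ẽ)²) ‖p‖²`.
-/

open Matrix Finset

theorem Matrix.sq_dotProduct_mulVec_le {m n : Type*} [Fintype m] [Fintype n] (A : Matrix m n ℝ)
    {R C : ℝ} (hR : ∀ i, ∑ j, |A i j| ≤ R) (hC : ∀ j, ∑ i, |A i j| ≤ C) (u : m → ℝ) (w : n → ℝ) :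
    (u ⬝ᵥ A *ᵥ w) ^ 2 ≤ R * C * (u ⬝ᵥ u) * (w ⬝ᵥ w) := by
  have hsum : u ⬝ᵥ A *ᵥ w = ∑ ij : m × n, u ij.1 * A ij.1 ij.2 * w ij.2 := by
    simp only [dotProduct, mulVec, mul_sum, Fintype.sum_prod_type, mul_assoc]
  have hu : ∑ ij : m × n, |A ij.1 ij.2| * u ij.1 ^ 2 ≤ R * (u ⬝ᵥ u) := by
    simp only [Fintype.sum_prod_type, ← sum_mul, dotProduct, mul_sum, ← sq]
    exact sum_le_sum fun i _ => by nlinarith [hR i, sq_nonneg (u i)]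
  have hw : ∑ ij : m × n, |A ij.1 ij.2| * w ij.2 ^ 2 ≤ C * (w ⬝ᵥ w) := by
    simp only [Fintype.sum_prod_type_right, ← sum_mul, dotProduct, mul_sum, ← sq]
    exact sum_le_sum fun j _ => by nlinarith [hC j, sq_nonneg (w j)]
  -- Cauchy–Schwarz over the pairs `(i, j)`, with weights `|A i j|`
  have hCS := sum_sq_le_sum_mul_sum_of_sq_le_mul univ
    (r := fun ij : m × n => u ij.1 * A ij.1 ij.2 * w ij.2)
    (f := fun ij => |A ij.1 ij.2| * u ij.1 ^ 2) (g := fun ij => |A ij.1 ij.2| * w ij.2 ^ 2)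
    (fun _ _ => by positivity) (fun _ _ => by positivity)
    (fun ij _ => le_of_eq <| by
      linear_combination (-(u ij.1 ^ 2 * w ij.2 ^ 2)) * sq_abs (A ij.1 ij.2))
  rw [hsum]
  calc _ ≤ _ := hCS
    _ ≤ (R * (u ⬝ᵥ u)) * (C * (w ⬝ᵥ w)) :=
        mul_le_mul hu hw (sum_nonneg fun _ _ => by positivity)
          ((sum_nonneg fun _ _ => by positivity).trans hu)
    _ = _ := by ring

theorem sq_mul_dotProduct_self_le_of_mulVec_eq_smul {ι : Type*} [Fintype ι]
    {D A : Matrix ι ι ℝ} (hD : Dᵀ = D) {c : ℝ} (hc : 0 ≤ c)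
    (hA : ∀ u w, (u ⬝ᵥ A *ᵥ w) ^ 2 ≤ c ^ 2 * (u ⬝ᵥ u) * (w ⬝ᵥ w))
    {p q : ι → ℝ} (hqp : q ⬝ᵥ p = 0) (hDq : D *ᵥ q = c • q) {E Etil : ℝ}
    (hψ : (D - A) *ᵥ (q + p) = E • (q + p)) (hE : E ≤ Etil) (hEtil : Etil < 0) :
    Etil ^ 2 * (q ⬝ᵥ q) ≤ c ^ 2 * (p ⬝ᵥ p) := by
  have hnonneg (v : ι → ℝ) : 0 ≤ v ⬝ᵥ v := sum_nonneg fun i _ => mul_self_nonneg (v i)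
  have hqDp : q ⬝ᵥ D *ᵥ p = 0 := by
    rw [dotProduct_mulVec, ← mulVec_transpose, hD, hDq, smul_dotProduct, hqp, smul_zero]
  have henergy : E * (q ⬝ᵥ q) = c * (q ⬝ᵥ q) - q ⬝ᵥ A *ᵥ q - q ⬝ᵥ A *ᵥ p := by
    have := congrArg (q ⬝ᵥ ·) hψ
    simp only [sub_mulVec, mulVec_add, dotProduct_sub, dotProduct_add, dotProduct_smul, hDq,
      hqDp, hqp, smul_eq_mul] at this
    linarith
  have hqAq : q ⬝ᵥ A *ᵥ q ≤ c * (q ⬝ᵥ q) :=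
    (abs_le_of_sq_le_sq' (by nlinarith [hA q q]) (mul_nonneg hc (hnonneg q))).2
  have hqq : 0 ≤ q ⬝ᵥ q := hnonneg q
  have hcross : -Etil * (q ⬝ᵥ q) ≤ q ⬝ᵥ A *ᵥ p := by nlinarith
  have hsq : (q ⬝ᵥ q) * (Etil ^ 2 * (q ⬝ᵥ q)) ≤ (q ⬝ᵥ q) * (c ^ 2 * (p ⬝ᵥ p)) := by
    nlinarith [hA q p, pow_le_pow_left₀ (by nlinarith) hcross 2]
  rcases hqq.eq_or_lt with hq0 | hqpos
  · rw [← hq0]; simp only [mul_zero]; exact mul_nonneg (sq_nonneg c) (hnonneg p)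
  · exact le_of_mul_le_mul_left hsq hqpos

theorem sum_sq_le_of_diagonal_sub_mulVec_eq_smul {ι : Type*} [Fintype ι] [DecidableEq ι]
    (P : ι → Prop) [DecidablePred P] {v : ι → ℝ} {A : Matrix ι ι ℝ} {c : ℝ} (hc : 0 ≤ c)
    (hv : ∀ i, ¬P i → v i = c) (hA : ∀ u w, (u ⬝ᵥ A *ᵥ w) ^ 2 ≤ c ^ 2 * (u ⬝ᵥ u) * (w ⬝ᵥ w))
    {ψ : ι → ℝ} {E Etil : ℝ} (hψ : (diagonal v - A) *ᵥ ψ = E • ψ) (hE : E ≤ Etil)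
    (hEtil : Etil < 0) :
    ∑ i, ψ i ^ 2 ≤ (1 + (c / Etil) ^ 2) * ∑ i, if P i then ψ i ^ 2 else 0 := by
  set p : ι → ℝ := fun i => if P i then ψ i else 0
  set q : ι → ℝ := fun i => if P i then 0 else ψ i
  have hsplit : q + p = ψ := funext fun i => by by_cases h : P i <;> simp [p, q, h]
  have hqp : q ⬝ᵥ p = 0 := sum_eq_zero fun i _ => by by_cases h : P i <;> simp [p, q, h]
  have hDq : diagonal v *ᵥ q = c • q := funext fun i => by
    by_cases h : P i <;> simp [q, h, mulVec_diagonal, hv]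
  have key := sq_mul_dotProduct_self_le_of_mulVec_eq_smul (diagonal_transpose v) hc hA hqp hDq
    (hsplit ▸ hψ) hE hEtil
  have hnorm : ∑ i, ψ i ^ 2 = q ⬝ᵥ q + p ⬝ᵥ p := by
    simp only [dotProduct, ← sum_add_distrib]
    exact sum_congr rfl fun i _ => by by_cases h : P i <;> simp [p, q, h, sq]
  have hp : p ⬝ᵥ p = ∑ i, if P i then ψ i ^ 2 else 0 :=
    sum_congr rfl fun i _ => by by_cases h : P i <;> simp [p, h, sq]
  have hq : q ⬝ᵥ q ≤ (c / Etil) ^ 2 * (p ⬝ᵥ p) := by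
    rw [div_pow, div_mul_eq_mul_div, le_div_iff₀ (sq_pos_of_neg hEtil)]
    linarith
  rw [hnorm, ← hp]
  linarith

section Lattice

variable {d : ℕ}

lemma dist1_comm (x y : Site d) : dist1 x y = dist1 y x :=
  sum_congr rfl fun _ _ => abs_sub_comm _ _

lemma exists_eq_update_of_dist1_eq_one {x y : Site d} (h : dist1 x y = 1) :
    ∃ i, ∃ s ∈ ({-1, 1} : Finset ℤ), y = Function.update x i (x i + s) := by
  obtain ⟨i, hi⟩ : ∃ i, x i ≠ y i := by
    by_contra! hxy
    simp [dist1, hxy] at h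
  have hsplit := add_sum_erase univ (fun j => |x j - y j|) (mem_univ i)
  have hi1 : 1 ≤ |x i - y i| := Int.one_le_abs (sub_ne_zero.mpr hi)
  have hrest : ∑ j ∈ univ.erase i, |x j - y j| = 0 := by
    have := sum_nonneg fun j (_ : j ∈ univ.erase i) => abs_nonneg (x j - y j)
    rw [dist1] at h
    omega
  refine ⟨i, y i - x i, ?_, funext fun j => ?_⟩
  · have : |x i - y i| = 1 := by rw [dist1] at h; omega
    simp only [mem_insert, mem_singleton]
    rcases abs_eq (zero_le_one' ℤ) |>.mp this with h' | h' <;> omega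
  · by_cases hj : j = i
    · subst hj; simp
    · have := (sum_eq_zero_iff_of_nonneg fun k _ => abs_nonneg (x k - y k)).mp hrest j
        (mem_erase.mpr ⟨hj, mem_univ j⟩)
      rw [Function.update_of_ne hj]
      exact (sub_eq_zero.mp (abs_eq_zero.mp this)).symm

lemma card_filter_dist1_eq_one_le (Λ : Finset (Site d)) (x : Site d) :
    #{y ∈ Λ | dist1 x y = 1} ≤ 2 * d :=
  calc #{y ∈ Λ | dist1 x y = 1}
      ≤ #((univ ×ˢ {-1, 1}).image fun is : Fin d × ℤ => Function.update x is.1 (x is.1 + is.2)) :=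
        card_le_card fun y hy => by
          obtain ⟨i, s, hs, rfl⟩ := exists_eq_update_of_dist1_eq_one (mem_filter.mp hy).2
          exact mem_image.mpr ⟨(i, s), mem_product.mpr ⟨mem_univ i, hs⟩, rfl⟩
    _ ≤ #(univ ×ˢ ({-1, 1} : Finset ℤ)) := card_image_le
    _ = 2 * d := by simp [mul_comm]

def boxAdj (Λ : Finset (Site d)) : Matrix Λ Λ ℝ := fun x y =>
  if dist1 (x : Site d) y = 1 then 1 else 0

lemma HBox_eq_diagonal_sub (M : ℕ) (lam : ℝ) (ω : Site d → ℝ) (Λ : Finset (Site d)) :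
    HBox M lam ω Λ = diagonal (fun x : Λ => 2 * d + lam * sporadicV M ω x) - boxAdj Λ := by
  ext x y
  by_cases h : x = y
  · subst h; simp [HBox, boxAdj, dist1]
  · simp only [HBox, boxAdj, Matrix.sub_apply, diagonal_apply_ne _ h, Subtype.ext_iff.not.mp h,
      if_false]
    split_ifs <;> norm_num

lemma sum_abs_boxAdj_le (Λ : Finset (Site d)) (x : Λ) : ∑ y, |boxAdj Λ x y| ≤ 2 * d := by
  have hcount : ∑ y, |boxAdj Λ x y| = #{y ∈ Λ | dist1 x y = 1} := by
    simp only [boxAdj, apply_ite, abs_one, abs_zero]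
    rw [sum_coe_sort Λ (fun y => if dist1 (x : Site d) y = 1 then (1 : ℝ) else 0), sum_boole]
  rw [hcount]
  exact_mod_cast card_filter_dist1_eq_one_le Λ x

lemma sq_dotProduct_boxAdj_mulVec_le (Λ : Finset (Site d)) (u w : Λ → ℝ) :
    (u ⬝ᵥ boxAdj Λ *ᵥ w) ^ 2 ≤ (2 * d) ^ 2 * (u ⬝ᵥ u) * (w ⬝ᵥ w) := by
  have hcol (y : Λ) : ∑ x, |boxAdj Λ x y| ≤ 2 * d := by
    simpa only [boxAdj, dist1_comm] using sum_abs_boxAdj_le Λ y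
  simpa only [sq] using sq_dotProduct_mulVec_le (boxAdj Λ) (sum_abs_boxAdj_le Λ) hcol u w

end Lattice

theorem eigenfunction_gamma_bound_general
    (d M : ℕ)
    (lam : ℝ)
    (Etil : ℝ) (hEtil : Etil < 0) :
    ∃ C : ℝ, ∀ a b : Site d, ∀ ω : Site d → ℝ, ∀ E : ℝ, E ≤ Etil →
      ∀ ψ : {x // x ∈ Finset.Icc a b} → ℝ,
        (HBox M lam ω (Finset.Icc a b)).mulVec ψ = E • ψ →
        Real.sqrt (∑ x, ψ x ^ 2) ≤
          C * Real.sqrt (∑ x : {x // x ∈ Finset.Icc a b}, if inGamma M x.val then ψ x ^ 2 else 0) := by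
  refine ⟨√(1 + (2 * d / Etil) ^ 2), fun a b ω E hE ψ hψ => ?_⟩
  rw [HBox_eq_diagonal_sub] at hψ
  have hoff (x : {x // x ∈ Finset.Icc a b}) (hx : ¬inGamma M x.val) :
      2 * d + lam * sporadicV M ω x = 2 * d := by
    simp [sporadicV, hx]
  rw [← Real.sqrt_mul (by positivity)]
  exact Real.sqrt_le_sqrt <| sum_sq_le_of_diagonal_sub_mulVec_eq_smul (fun x => inGamma M x.val)
    (by positivity) hoff (sq_dotProduct_boxAdj_mulVec_le _) hψ hE hEtil

/-- For every `Ẽ < 0` there is a constant `C_Ẽ` (independent of `Λ` and `ω`) such that: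
if `Λ ⊂ ℤ^d` is a finite box, `E ≤ Ẽ` is an eigenvalue of `H_{ω,Λ}` and `ψ` a
corresponding eigenvector, then `‖ψ‖ ≤ C_Ẽ ‖χ_{Λ∩Γ} ψ‖`. -/
theorem eigenfunction_gamma_bound
    (d M : ℕ) (hd : 1 ≤ d) (hM : 2 ≤ M)
    (lam : ℝ) (hlam : 0 < lam)
    (Etil : ℝ) (hEtil : Etil < 0) :
    ∃ C : ℝ, ∀ a b : Site d, ∀ ω : Site d → ℝ, ∀ E : ℝ, E ≤ Etil →
      ∀ ψ : {x // x ∈ Finset.Icc a b} → ℝ,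
        (HBox M lam ω (Finset.Icc a b)).mulVec ψ = E • ψ →
        Real.sqrt (∑ x, ψ x ^ 2) ≤
          C * Real.sqrt (∑ x : {x // x ∈ Finset.Icc a b}, if inGamma M x.val then ψ x ^ 2 else 0) :=
  eigenfunction_gamma_bound_general d M lam Etil hEtil

end
end

section
/- (Decoupling lemma) Let μ be a probability measure on ℝ with a bounded density and compact support. Then for every s ∈ (0, 1/2) there is a constant D_s < ∞ such that for all α, β, γ ∈ ℂ: ∫ |x − α|^{−s} · |x − γ|^s · |x − β|^{−s} dμ(x) ≤ D_s · ( ∫ |x − γ|^s |x − β|^{−s} dμ(x) ) · ( ∫ |x − α|^{−s} dμ(x) ). -/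
/-!
Write `⟨w⟩ = 1 + ‖w‖` and let `μ` live on `[-R, R]`. For `x` in the support,
`‖x - w‖ ≤ (R + 1) ⟨w⟩`, and `‖x - w‖ ≥ ⟨w⟩ / 2` once `‖w‖ ≥ 2R + 1`. Since the density is
bounded, `∫ ‖x - w‖ ^ (-t) dμ` is bounded uniformly in `w` for `t < 1`, and for a suitable `c > 0`
every set `{x | ‖x - w‖ < c ⟨w⟩}` has `μ`-mass at most `1/2`; hence
`∫ ‖x - γ‖ ^ s ‖x - β‖ ^ (-s) dμ ≳ ⟨γ⟩ ^ s ⟨β⟩ ^ (-s)`. Conversely `‖x - γ‖ ^ s ≲ ⟨γ⟩ ^ s`, and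
`∫ ‖x - α‖ ^ (-s) ‖x - β‖ ^ (-s) dμ ≲ ⟨β⟩ ^ (-s)`: for `β` far from the support
`‖x - β‖ ^ (-s) ≍ ⟨β⟩ ^ (-s)`, and for `β` near it
`‖x - α‖ ^ (-s) ‖x - β‖ ^ (-s) ≤ ‖x - α‖ ^ (-2s) + ‖x - β‖ ^ (-2s)` with `2s < 1`.
So the left-hand side is `≲ ∫ ‖x - γ‖ ^ s ‖x - β‖ ^ (-s) dμ`. Finally, if `α` is far from the
support then `‖x - α‖ ^ (-s)` is comparable to its own mean, and otherwise that mean is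
bounded below.
-/

open MeasureTheory ENNReal NNReal Metric

namespace ENNReal

theorem rpow_le_rpow_of_nonpos {x y : ℝ≥0∞} {z : ℝ} (hxy : x ≤ y) (hz : z ≤ 0) :
    y ^ z ≤ x ^ z := by
  rw [← neg_neg z, rpow_neg y, rpow_neg x]
  exact ENNReal.inv_le_inv.2 (rpow_le_rpow hxy (neg_nonneg.2 hz))

theorem rpow_mul_rpow_neg {x : ℝ≥0∞} (hx0 : x ≠ 0) (hxt : x ≠ ⊤) (t : ℝ) :
    x ^ t * x ^ (-t) = 1 := by
  rw [← rpow_add _ _ hx0 hxt, add_neg_cancel, rpow_zero]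

theorem rpow_neg_mul_rpow_neg_le_add {s : ℝ} (hs : 0 ≤ s) (a b : ℝ≥0∞) :
    a ^ (-s) * b ^ (-s) ≤ a ^ (-(2 * s)) + b ^ (-(2 * s)) := by
  have hsq (c : ℝ≥0∞) : c ^ (-s) * c ^ (-s) = c ^ (-(2 * s)) := by
    rw [show -(2 * s) = -s * 2 by ring, rpow_mul, rpow_two, sq]
  rcases le_total a b with h | h
  · calc a ^ (-s) * b ^ (-s) ≤ a ^ (-s) * a ^ (-s) :=
        mul_le_mul_right (rpow_le_rpow_of_nonpos h (neg_nonpos.2 hs)) _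
      _ ≤ _ := (hsq a).le.trans le_self_add
  · calc a ^ (-s) * b ^ (-s) ≤ b ^ (-s) * b ^ (-s) :=
        mul_le_mul_left (rpow_le_rpow_of_nonpos h (neg_nonpos.2 hs)) _
      _ ≤ _ := (hsq b).le.trans le_add_self

end ENNReal

theorem lintegral_ball_enorm_rpow_neg_lt_top {t : ℝ} (ht : t < 1) :
    ∫⁻ y in ball (0:ℝ) 1, ‖y‖ₑ ^ (-t) < ⊤ := by
  have hint : IntegrableOn (fun y : ℝ ↦ ‖y‖ ^ (-t)) (ball 0 1) :=
    integrableOn_ball_of_norm_le_rpow (C := 1) (by simp) (by simpa using ht)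
      (ae_of_all _ fun y ↦ by simp [abs_of_nonneg (Real.rpow_nonneg (abs_nonneg y) _)])
      (measurable_norm.pow_const _).aestronglyMeasurable
  refine lt_of_eq_of_lt (setLIntegral_congr_fun_ae measurableSet_ball ?_) hint.2
  filter_upwards [compl_mem_ae_iff.2 (measure_singleton (0:ℝ))] with y hy _
  rw [Real.enorm_of_nonneg (Real.rpow_nonneg (norm_nonneg y) _), ← ofReal_norm,
    ENNReal.ofReal_rpow_of_pos (norm_pos_iff.2 hy)]

theorem abs_sub_re_le_norm_sub (x : ℝ) (w : ℂ) : |x - w.re| ≤ ‖(x:ℂ) - w‖ := by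
  simpa using Complex.abs_re_le_norm ((x:ℂ) - w)

theorem enorm_ofReal_sub_rpow_neg_le_one_add_indicator {t : ℝ} (ht : 0 ≤ t) (x : ℝ) (w : ℂ) :
    ‖(x:ℂ) - w‖ₑ ^ (-t) ≤ 1 + (ball 0 1).indicator (fun y : ℝ ↦ ‖y‖ₑ ^ (-t)) (x - w.re) := by
  by_cases h : ‖(x:ℂ) - w‖ < 1
  · have hball : x - w.re ∈ ball (0:ℝ) 1 := by
      rw [mem_ball_zero_iff]; exact (abs_sub_re_le_norm_sub x w).trans_lt h
    have hre : ‖x - w.re‖ₑ ≤ ‖(x:ℂ) - w‖ₑ := by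
      rw [← ofReal_norm, ← ofReal_norm]
      exact ofReal_le_ofReal (abs_sub_re_le_norm_sub x w)
    rw [Set.indicator_of_mem hball]
    exact (rpow_le_rpow_of_nonpos hre (neg_nonpos.2 ht)).trans le_add_self
  · have h1 : 1 ≤ ‖(x:ℂ) - w‖ₑ := by
      rw [← ofReal_norm, ← ofReal_one]; exact ofReal_le_ofReal (not_lt.1 h)
    calc ‖(x:ℂ) - w‖ₑ ^ (-t) ≤ 1 ^ (-t) := rpow_le_rpow_of_nonpos h1 (neg_nonpos.2 ht)
      _ ≤ _ := by rw [ENNReal.one_rpow]; exact le_self_add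

theorem ofReal_one_add_norm (w : ℂ) : ENNReal.ofReal (1 + ‖w‖) = 1 + ‖w‖ₑ := by
  rw [ofReal_add zero_le_one (norm_nonneg w), ofReal_one, ofReal_norm]

section Support

variable {R : ℝ} {x : ℝ}

theorem enorm_ofReal_sub_le (hR : 0 ≤ R) (hx : |x| ≤ R) (w : ℂ) :
    ‖(x:ℂ) - w‖ₑ ≤ ENNReal.ofReal (R + 1) * (1 + ‖w‖ₑ) := by
  rw [← ofReal_norm, ← ofReal_one_add_norm, ← ofReal_mul (by linarith)]
  refine ofReal_le_ofReal ((norm_sub_le _ _).trans ?_)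
  rw [Complex.norm_real, Real.norm_eq_abs]
  nlinarith [norm_nonneg w]

theorem one_add_norm_le_two_mul_norm_sub (hx : |x| ≤ R) {w : ℂ} (hw : 2 * R + 1 ≤ ‖w‖) :
    1 + ‖w‖ ≤ 2 * ‖(x:ℂ) - w‖ := by
  have := norm_sub_norm_le w (x:ℂ)
  rw [Complex.norm_real, Real.norm_eq_abs, norm_sub_rev] at this
  linarith

theorem one_add_enorm_le_two_mul_enorm_sub (hx : |x| ≤ R) {w : ℂ} (hw : 2 * R + 1 ≤ ‖w‖) :
    1 + ‖w‖ₑ ≤ 2 * ‖(x:ℂ) - w‖ₑ := by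
  rw [← ofReal_one_add_norm, ← ofReal_norm, ← ofReal_ofNat 2, ← ofReal_mul zero_le_two]
  exact ofReal_le_ofReal (one_add_norm_le_two_mul_norm_sub hx hw)

variable {t : ℝ}

theorem enorm_ofReal_sub_rpow_le (hR : 0 ≤ R) (hx : |x| ≤ R) (w : ℂ) (ht : 0 ≤ t) :
    ‖(x:ℂ) - w‖ₑ ^ t ≤ ENNReal.ofReal (R + 1) ^ t * (1 + ‖w‖ₑ) ^ t := by
  rw [← mul_rpow_of_nonneg _ _ ht]
  exact rpow_le_rpow (enorm_ofReal_sub_le hR hx w) ht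

theorem rpow_neg_le_enorm_ofReal_sub_rpow_neg (hR : 0 ≤ R) (hx : |x| ≤ R) (w : ℂ) (ht : 0 ≤ t) :
    ENNReal.ofReal (R + 1) ^ (-t) * (1 + ‖w‖ₑ) ^ (-t) ≤ ‖(x:ℂ) - w‖ₑ ^ (-t) := by
  rw [← mul_rpow_of_ne_top ofReal_ne_top (by finiteness)]
  exact rpow_le_rpow_of_nonpos (enorm_ofReal_sub_le hR hx w) (neg_nonpos.2 ht)

theorem enorm_ofReal_sub_rpow_neg_le_of_le_norm (hx : |x| ≤ R) {w : ℂ} (hw : 2 * R + 1 ≤ ‖w‖)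
    (ht : 0 ≤ t) : ‖(x:ℂ) - w‖ₑ ^ (-t) ≤ 2 ^ t * (1 + ‖w‖ₑ) ^ (-t) := by
  have h := rpow_le_rpow_of_nonpos (one_add_enorm_le_two_mul_enorm_sub hx hw) (neg_nonpos.2 ht)
  rw [mul_rpow_of_ne_top ofNat_ne_top enorm_ne_top] at h
  calc ‖(x:ℂ) - w‖ₑ ^ (-t) = 2 ^ t * (2 ^ (-t) * ‖(x:ℂ) - w‖ₑ ^ (-t)) := by
        rw [← mul_assoc, rpow_mul_rpow_neg two_ne_zero ofNat_ne_top, one_mul]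
    _ ≤ 2 ^ t * (1 + ‖w‖ₑ) ^ (-t) := by gcongr

theorem one_le_rpow_mul_one_add_enorm_rpow_neg (hR : 0 ≤ R) {w : ℂ} (hw : ‖w‖ < 2 * R + 1)
    (ht : 0 ≤ t) : 1 ≤ ENNReal.ofReal (2 * R + 2) ^ t * (1 + ‖w‖ₑ) ^ (-t) := by
  have hW : 1 + ‖w‖ₑ ≤ ENNReal.ofReal (2 * R + 2) := by
    rw [← ofReal_one_add_norm]; exact ofReal_le_ofReal (by linarith)
  calc 1 = ENNReal.ofReal (2 * R + 2) ^ t * ENNReal.ofReal (2 * R + 2) ^ (-t) :=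
        (rpow_mul_rpow_neg (by simp; linarith) ofReal_ne_top t).symm
    _ ≤ _ := mul_le_mul_right (rpow_le_rpow_of_nonpos hW (neg_nonpos.2 ht)) _

end Support

section Measure

variable {μ : Measure ℝ} {B : ℝ≥0} {R : ℝ}

theorem rpow_neg_le_lintegral_enorm_sub_rpow_neg [IsProbabilityMeasure μ] (hR0 : 0 ≤ R)
    (hR : ∀ᵐ x ∂μ, |x| ≤ R) (w : ℂ) {t : ℝ} (ht : 0 ≤ t) :
    ENNReal.ofReal (R + 1) ^ (-t) * (1 + ‖w‖ₑ) ^ (-t) ≤ ∫⁻ x, ‖(x:ℂ) - w‖ₑ ^ (-t) ∂μ := by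
  calc ENNReal.ofReal (R + 1) ^ (-t) * (1 + ‖w‖ₑ) ^ (-t)
      = ∫⁻ _, ENNReal.ofReal (R + 1) ^ (-t) * (1 + ‖w‖ₑ) ^ (-t) ∂μ := by
        rw [lintegral_const, measure_univ, mul_one]
    _ ≤ _ := lintegral_mono_ae <| hR.mono fun x hx ↦
        rpow_neg_le_enorm_ofReal_sub_rpow_neg hR0 hx w ht

theorem exists_lintegral_enorm_sub_rpow_neg_le [IsProbabilityMeasure μ]
    (hμ : μ ≤ (B : ℝ≥0∞) • volume) {t : ℝ} (ht0 : 0 ≤ t) (ht1 : t < 1) :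
    ∃ C : ℝ≥0∞, C ≠ ∞ ∧ ∀ w : ℂ, ∫⁻ x, ‖(x:ℂ) - w‖ₑ ^ (-t) ∂μ ≤ C := by
  set g : ℝ → ℝ≥0∞ := (ball 0 1).indicator fun y ↦ ‖y‖ₑ ^ (-t)
  have hg : Measurable g := (by fun_prop : Measurable fun y : ℝ ↦ ‖y‖ₑ ^ (-t)).indicator
    measurableSet_ball
  refine ⟨1 + B * ∫⁻ y in ball (0:ℝ) 1, ‖y‖ₑ ^ (-t),
    by finiteness [(lintegral_ball_enorm_rpow_neg_lt_top ht1).ne], fun w ↦ ?_⟩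
  calc ∫⁻ x, ‖(x:ℂ) - w‖ₑ ^ (-t) ∂μ ≤ ∫⁻ x, 1 + g (x - w.re) ∂μ :=
        lintegral_mono fun x ↦ enorm_ofReal_sub_rpow_neg_le_one_add_indicator ht0 x w
    _ = 1 + ∫⁻ x, g (x - w.re) ∂μ := by
      rw [lintegral_add_left measurable_const, lintegral_const, measure_univ, one_mul]
    _ ≤ 1 + ∫⁻ x, g (x - w.re) ∂((B : ℝ≥0∞) • volume) := by gcongr
    _ = 1 + B * ∫⁻ y in ball (0:ℝ) 1, ‖y‖ₑ ^ (-t) := by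
      rw [lintegral_smul_measure, lintegral_sub_right_eq_self g,
        lintegral_indicator measurableSet_ball, smul_eq_mul]

theorem measure_norm_ofReal_sub_lt_le (hμ : μ ≤ (B : ℝ≥0∞) • volume) (w : ℂ) (r : ℝ) :
    μ {x | ‖(x:ℂ) - w‖ < r} ≤ B * ENNReal.ofReal (2 * r) :=
  calc μ {x | ‖(x:ℂ) - w‖ < r} ≤ μ (ball w.re r) :=
        measure_mono fun x hx ↦ (abs_sub_re_le_norm_sub x w).trans_lt hx
    _ ≤ ((B : ℝ≥0∞) • volume) (ball w.re r) := hμ _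
    _ = B * ENNReal.ofReal (2 * r) := by rw [Measure.smul_apply, Real.volume_ball, smul_eq_mul]

theorem exists_measure_norm_ofReal_sub_lt_le_half (hμ : μ ≤ (B : ℝ≥0∞) • volume) (hR0 : 0 ≤ R)
    (hR : ∀ᵐ x ∂μ, |x| ≤ R) :
    ∃ c : ℝ, 0 < c ∧ ∀ w : ℂ, μ {x | ‖(x:ℂ) - w‖ < c * (1 + ‖w‖)} ≤ 2⁻¹ := by
  -- far from the support the set is null; near it, it lies in an interval of length `1 / (2B + 2)`
  refine ⟨1 / (4 * (B + 1) * (2 * R + 2)), by positivity, fun w ↦ ?_⟩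
  have hB : (0 : ℝ) ≤ B := B.2
  rcases le_or_gt (2 * R + 1) ‖w‖ with hw | hw
  · have hc : 1 / (4 * (B + 1) * (2 * R + 2)) ≤ (1 / 2 : ℝ) :=
      one_div_le_one_div_of_le two_pos (by nlinarith)
    refine (measure_eq_zero_iff_ae_notMem.2 (hR.mono fun x hx ↦ ?_)).trans_le bot_le
    have := one_add_norm_le_two_mul_norm_sub hx hw
    simp only [Set.mem_ofPred_eq, not_lt]
    nlinarith [norm_nonneg w]
  · calc μ {x | ‖(x:ℂ) - w‖ < 1 / (4 * (B + 1) * (2 * R + 2)) * (1 + ‖w‖)}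
        ≤ μ {x | ‖(x:ℂ) - w‖ < 1 / (4 * (B + 1))} := by
          refine measure_mono (Set.ofPred_subset_ofPred.2 fun x hx ↦ hx.trans_le ?_)
          rw [div_mul_eq_mul_div, one_mul, div_le_div_iff₀ (by positivity) (by positivity)]
          nlinarith
      _ ≤ B * ENNReal.ofReal (2 * (1 / (4 * (B + 1)))) := measure_norm_ofReal_sub_lt_le hμ w _
      _ ≤ 2⁻¹ := by
          rw [← ofReal_coe_nnreal, ← ofReal_mul hB, ← ofReal_ofNat 2, ← ofReal_inv_of_pos two_pos]
          refine ofReal_le_ofReal ?_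
          rw [show (B : ℝ) * (2 * (1 / (4 * (B + 1)))) = B / (2 * (B + 1)) by field_simp; ring,
            div_le_iff₀ (by positivity)]
          linarith

theorem exists_rpow_mul_rpow_neg_le_lintegral [IsProbabilityMeasure μ]
    (hμ : μ ≤ (B : ℝ≥0∞) • volume) (hR0 : 0 ≤ R) (hR : ∀ᵐ x ∂μ, |x| ≤ R) {s : ℝ} (hs : 0 ≤ s) :
    ∃ C : ℝ≥0∞, C ≠ ∞ ∧ ∀ β γ : ℂ, (1 + ‖γ‖ₑ) ^ s * (1 + ‖β‖ₑ) ^ (-s) ≤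
      C * ∫⁻ x, ‖(x:ℂ) - γ‖ₑ ^ s * ‖(x:ℂ) - β‖ₑ ^ (-s) ∂μ := by
  obtain ⟨c, hc, hsmall⟩ := exists_measure_norm_ofReal_sub_lt_le_half hμ hR0 hR
  set κ := 2⁻¹ * ENNReal.ofReal c ^ s * ENNReal.ofReal (R + 1) ^ (-s)
  have hκ0 : κ ≠ 0 := mul_ne_zero (mul_ne_zero (by simp) (rpow_pos (ofReal_pos.2 hc)
    ofReal_ne_top).ne') (rpow_pos (ofReal_pos.2 (by linarith)) ofReal_ne_top).ne'
  refine ⟨κ⁻¹, inv_ne_top.2 hκ0, fun β γ ↦ ?_⟩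
  rw [← ENNReal.mul_le_iff_le_inv hκ0 (by finiteness)]
  set ε := (ENNReal.ofReal c * (1 + ‖γ‖ₑ)) ^ s * (ENNReal.ofReal (R + 1) * (1 + ‖β‖ₑ)) ^ (-s)
    with hε_def
  set S := {x : ℝ | ‖(x:ℂ) - γ‖ < c * (1 + ‖γ‖)}
  have hS : 2⁻¹ ≤ μ Sᶜ := by
    rw [prob_compl_eq_one_sub (measurableSet_lt (by fun_prop) measurable_const),
      ← one_sub_inv_two]
    exact tsub_le_tsub_left (hsmall γ) 1
  have hε : Sᶜ ≤ᵐ[μ] {x | ε ≤ ‖(x:ℂ) - γ‖ₑ ^ s * ‖(x:ℂ) - β‖ₑ ^ (-s)} := by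
    filter_upwards [hR] with x hx (hxS : x ∉ S)
    have hγ : ENNReal.ofReal c * (1 + ‖γ‖ₑ) ≤ ‖(x:ℂ) - γ‖ₑ := by
      rw [← ofReal_one_add_norm, ← ofReal_mul hc.le, ← ofReal_norm]
      exact ofReal_le_ofReal (not_lt.1 hxS)
    exact mul_le_mul' (rpow_le_rpow hγ hs)
      (rpow_le_rpow_of_nonpos (enorm_ofReal_sub_le hR0 hx β) (neg_nonpos.2 hs))
  calc κ * ((1 + ‖γ‖ₑ) ^ s * (1 + ‖β‖ₑ) ^ (-s)) = ε * 2⁻¹ := by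
        rw [hε_def, mul_rpow_of_ne_top ofReal_ne_top (by finiteness),
          mul_rpow_of_ne_top ofReal_ne_top (by finiteness)]
        ring
    _ ≤ ε * μ {x | ε ≤ ‖(x:ℂ) - γ‖ₑ ^ s * ‖(x:ℂ) - β‖ₑ ^ (-s)} := by
        gcongr; exact hS.trans (measure_mono_ae hε)
    _ ≤ _ := mul_meas_ge_le_lintegral₀ (by fun_prop) ε

theorem exists_lintegral_rpow_neg_mul_rpow_neg_le [IsProbabilityMeasure μ]
    (hμ : μ ≤ (B : ℝ≥0∞) • volume) (hR0 : 0 ≤ R) (hR : ∀ᵐ x ∂μ, |x| ≤ R) {s : ℝ} (hs0 : 0 ≤ s)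
    (hs : s < 1 / 2) :
    ∃ C : ℝ≥0∞, C ≠ ∞ ∧ ∀ α β : ℂ,
      ∫⁻ x, ‖(x:ℂ) - α‖ₑ ^ (-s) * ‖(x:ℂ) - β‖ₑ ^ (-s) ∂μ ≤ C * (1 + ‖β‖ₑ) ^ (-s) := by
  obtain ⟨C₁, hC₁, h₁⟩ := exists_lintegral_enorm_sub_rpow_neg_le hμ hs0 (by linarith)
  obtain ⟨C₂, hC₂, h₂⟩ :=
    exists_lintegral_enorm_sub_rpow_neg_le hμ (by linarith : 0 ≤ 2 * s) (by linarith)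
  refine ⟨C₁ * 2 ^ s + 2 * C₂ * ENNReal.ofReal (2 * R + 2) ^ s, by finiteness, fun α β ↦ ?_⟩
  rcases le_or_gt (2 * R + 1) ‖β‖ with hβ | hβ
  · calc ∫⁻ x, ‖(x:ℂ) - α‖ₑ ^ (-s) * ‖(x:ℂ) - β‖ₑ ^ (-s) ∂μ
        ≤ ∫⁻ x, ‖(x:ℂ) - α‖ₑ ^ (-s) * (2 ^ s * (1 + ‖β‖ₑ) ^ (-s)) ∂μ :=
          lintegral_mono_ae <| hR.mono fun x hx ↦
            mul_le_mul_right (enorm_ofReal_sub_rpow_neg_le_of_le_norm hx hβ hs0) _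
      _ = (∫⁻ x, ‖(x:ℂ) - α‖ₑ ^ (-s) ∂μ) * (2 ^ s * (1 + ‖β‖ₑ) ^ (-s)) :=
          lintegral_mul_const _ (by fun_prop)
      _ ≤ C₁ * (2 ^ s * (1 + ‖β‖ₑ) ^ (-s)) := by gcongr; exact h₁ α
      _ ≤ _ := by rw [← mul_assoc, add_mul]; exact le_self_add
  · calc ∫⁻ x, ‖(x:ℂ) - α‖ₑ ^ (-s) * ‖(x:ℂ) - β‖ₑ ^ (-s) ∂μ
        ≤ ∫⁻ x, ‖(x:ℂ) - α‖ₑ ^ (-(2 * s)) + ‖(x:ℂ) - β‖ₑ ^ (-(2 * s)) ∂μ :=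
          lintegral_mono fun x ↦ rpow_neg_mul_rpow_neg_le_add hs0 _ _
      _ = (∫⁻ x, ‖(x:ℂ) - α‖ₑ ^ (-(2 * s)) ∂μ) + ∫⁻ x, ‖(x:ℂ) - β‖ₑ ^ (-(2 * s)) ∂μ :=
          lintegral_add_left (by fun_prop) _
      _ ≤ C₂ + C₂ := add_le_add (h₂ α) (h₂ β)
      _ = 2 * C₂ * 1 := by ring
      _ ≤ 2 * C₂ * (ENNReal.ofReal (2 * R + 2) ^ s * (1 + ‖β‖ₑ) ^ (-s)) := by
          gcongr; exact one_le_rpow_mul_one_add_enorm_rpow_neg hR0 hβ hs0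
      _ ≤ _ := by rw [← mul_assoc, add_mul]; exact le_add_self

theorem exists_lintegral_mul_le_lintegral [IsProbabilityMeasure μ]
    (hμ : μ ≤ (B : ℝ≥0∞) • volume) (hR0 : 0 ≤ R) (hR : ∀ᵐ x ∂μ, |x| ≤ R) {s : ℝ} (hs0 : 0 ≤ s)
    (hs : s < 1 / 2) :
    ∃ C : ℝ≥0∞, C ≠ ∞ ∧ ∀ α β γ : ℂ,
      ∫⁻ x, ‖(x:ℂ) - α‖ₑ ^ (-s) * (‖(x:ℂ) - γ‖ₑ ^ s * ‖(x:ℂ) - β‖ₑ ^ (-s)) ∂μ ≤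
        C * ∫⁻ x, ‖(x:ℂ) - γ‖ₑ ^ s * ‖(x:ℂ) - β‖ₑ ^ (-s) ∂μ := by
  obtain ⟨C₂, hC₂, h₂⟩ := exists_lintegral_rpow_neg_mul_rpow_neg_le hμ hR0 hR hs0 hs
  obtain ⟨C₃, hC₃, h₃⟩ := exists_rpow_mul_rpow_neg_le_lintegral hμ hR0 hR hs0
  refine ⟨ENNReal.ofReal (R + 1) ^ s * C₂ * C₃, by finiteness, fun α β γ ↦ ?_⟩
  set K := ENNReal.ofReal (R + 1) ^ s * (1 + ‖γ‖ₑ) ^ s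
  calc ∫⁻ x, ‖(x:ℂ) - α‖ₑ ^ (-s) * (‖(x:ℂ) - γ‖ₑ ^ s * ‖(x:ℂ) - β‖ₑ ^ (-s)) ∂μ
      ≤ ∫⁻ x, K * (‖(x:ℂ) - α‖ₑ ^ (-s) * ‖(x:ℂ) - β‖ₑ ^ (-s)) ∂μ := by
        refine lintegral_mono_ae <| hR.mono fun x hx ↦ ?_
        rw [mul_left_comm]
        exact mul_le_mul_left (enorm_ofReal_sub_rpow_le hR0 hx γ hs0) _
    _ = K * ∫⁻ x, ‖(x:ℂ) - α‖ₑ ^ (-s) * ‖(x:ℂ) - β‖ₑ ^ (-s) ∂μ :=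
        lintegral_const_mul _ (by fun_prop)
    _ ≤ K * (C₂ * (1 + ‖β‖ₑ) ^ (-s)) := by gcongr; exact h₂ α β
    _ = ENNReal.ofReal (R + 1) ^ s * C₂ * ((1 + ‖γ‖ₑ) ^ s * (1 + ‖β‖ₑ) ^ (-s)) := by ring
    _ ≤ ENNReal.ofReal (R + 1) ^ s * C₂ *
          (C₃ * ∫⁻ x, ‖(x:ℂ) - γ‖ₑ ^ s * ‖(x:ℂ) - β‖ₑ ^ (-s) ∂μ) :=
        mul_le_mul_right (h₃ β γ) _
    _ = _ := by ring

theorem lintegral_enorm_sub_rpow_neg_mul_le_of_le_norm [IsProbabilityMeasure μ] (hR0 : 0 ≤ R)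
    (hR : ∀ᵐ x ∂μ, |x| ≤ R) {t : ℝ} (ht : 0 ≤ t) {α : ℂ} (hα : 2 * R + 1 ≤ ‖α‖)
    {g : ℝ → ℝ≥0∞} (hg : AEMeasurable g μ) :
    ∫⁻ x, ‖(x:ℂ) - α‖ₑ ^ (-t) * g x ∂μ ≤
      2 ^ t * ENNReal.ofReal (R + 1) ^ t * (∫⁻ x, ‖(x:ℂ) - α‖ₑ ^ (-t) ∂μ) * ∫⁻ x, g x ∂μ := by
  set I := ∫⁻ x : ℝ, ‖(x:ℂ) - α‖ₑ ^ (-t) ∂μ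
  have hF : ∀ᵐ x : ℝ ∂μ, ‖(x:ℂ) - α‖ₑ ^ (-t) ≤ 2 ^ t * ENNReal.ofReal (R + 1) ^ t * I := by
    filter_upwards [hR] with x hx
    calc ‖(x:ℂ) - α‖ₑ ^ (-t) ≤ 2 ^ t * (1 + ‖α‖ₑ) ^ (-t) :=
          enorm_ofReal_sub_rpow_neg_le_of_le_norm hx hα ht
      _ = 2 ^ t * ENNReal.ofReal (R + 1) ^ t *
            (ENNReal.ofReal (R + 1) ^ (-t) * (1 + ‖α‖ₑ) ^ (-t)) := by
          rw [mul_assoc (2 ^ t), ← mul_assoc (ENNReal.ofReal (R + 1) ^ t),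
            rpow_mul_rpow_neg (by simp; linarith) ofReal_ne_top, one_mul]
      _ ≤ _ := by gcongr; exact rpow_neg_le_lintegral_enorm_sub_rpow_neg hR0 hR α ht
  calc ∫⁻ x, ‖(x:ℂ) - α‖ₑ ^ (-t) * g x ∂μ
      ≤ ∫⁻ x, 2 ^ t * ENNReal.ofReal (R + 1) ^ t * I * g x ∂μ :=
        lintegral_mono_ae <| hF.mono fun x hx ↦ mul_le_mul_left hx _
    _ = _ := lintegral_const_mul'' _ hg

theorem one_le_mul_lintegral_enorm_sub_rpow_neg [IsProbabilityMeasure μ] (hR0 : 0 ≤ R)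
    (hR : ∀ᵐ x ∂μ, |x| ≤ R) {t : ℝ} (ht : 0 ≤ t) {α : ℂ} (hα : ‖α‖ < 2 * R + 1) :
    1 ≤ ENNReal.ofReal (R + 1) ^ t * ENNReal.ofReal (2 * R + 2) ^ t *
      ∫⁻ x, ‖(x:ℂ) - α‖ₑ ^ (-t) ∂μ :=
  calc 1 ≤ ENNReal.ofReal (2 * R + 2) ^ t * (1 + ‖α‖ₑ) ^ (-t) :=
        one_le_rpow_mul_one_add_enorm_rpow_neg hR0 hα ht
    _ = ENNReal.ofReal (R + 1) ^ t * ENNReal.ofReal (2 * R + 2) ^ t *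
          (ENNReal.ofReal (R + 1) ^ (-t) * (1 + ‖α‖ₑ) ^ (-t)) := by
        rw [mul_comm (ENNReal.ofReal (R + 1) ^ t), mul_assoc,
          ← mul_assoc (ENNReal.ofReal (R + 1) ^ t),
          rpow_mul_rpow_neg (by simp; linarith) ofReal_ne_top, one_mul]
    _ ≤ _ := by gcongr; exact rpow_neg_le_lintegral_enorm_sub_rpow_neg hR0 hR α ht

end Measure

theorem decoupling_lemma_general
    (μ : Measure ℝ) (hprob : IsProbabilityMeasure μ)
    (ρ : ℝ → ℝ) (B : ℝ) (hρB : ∀ x, ρ x ≤ B)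
    (hμρ : μ = volume.withDensity (fun x => ENNReal.ofReal (ρ x)))
    (hK : ∃ K : Set ℝ, IsCompact K ∧ μ Kᶜ = 0)
    (s : ℝ) (hs : s ∈ Set.Ioo (0:ℝ) (1/2)) :
    ∃ Ds : ℝ, ∀ α β γ : ℂ,
      ∫⁻ x, (‖(x:ℂ) - α‖₊ : ℝ≥0∞) ^ (-s) * (‖(x:ℂ) - γ‖₊ : ℝ≥0∞) ^ s *
          (‖(x:ℂ) - β‖₊ : ℝ≥0∞) ^ (-s) ∂μ ≤
        ENNReal.ofReal Ds *
          (∫⁻ x, (‖(x:ℂ) - γ‖₊ : ℝ≥0∞) ^ s * (‖(x:ℂ) - β‖₊ : ℝ≥0∞) ^ (-s) ∂μ) *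
          (∫⁻ x, (‖(x:ℂ) - α‖₊ : ℝ≥0∞) ^ (-s) ∂μ) := by
  have hμ : μ ≤ (B.toNNReal : ℝ≥0∞) • volume := by
    rw [hμρ, ← withDensity_const]
    exact withDensity_mono (ae_of_all _ fun x ↦ ofReal_le_ofReal (hρB x))
  obtain ⟨K, hKc, hKμ⟩ := hK
  obtain ⟨R, hR0, hKR⟩ := hKc.isBounded.exists_pos_norm_le
  have hR : ∀ᵐ x ∂μ, |x| ≤ R :=
    (measure_eq_zero_iff_ae_notMem.1 hKμ).mono fun x hx ↦ hKR x (Set.notMem_compl_iff.1 hx)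
  obtain ⟨C, hC, hFG⟩ := exists_lintegral_mul_le_lintegral hμ hR0.le hR hs.1.le hs.2
  set D := 2 ^ s * ENNReal.ofReal (R + 1) ^ s +
    C * (ENNReal.ofReal (R + 1) ^ s * ENNReal.ofReal (2 * R + 2) ^ s)
  refine ⟨D.toReal, fun α β γ ↦ ?_⟩
  simp only [ofReal_toReal (by finiteness : D ≠ ∞), ← enorm_eq_nnnorm]
  rw [lintegral_congr fun x ↦ mul_assoc _ _ _]
  rcases le_or_gt (2 * R + 1) ‖α‖ with hα | hα
  · calc _ ≤ _ := lintegral_enorm_sub_rpow_neg_mul_le_of_le_norm hR0.le hR hs.1.le hα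
          (by fun_prop)
      _ ≤ _ := by rw [mul_right_comm]; gcongr; exact le_self_add
  · calc _ ≤ _ := hFG α β γ
      _ ≤ _ := le_mul_of_one_le_right'
          (one_le_mul_lintegral_enorm_sub_rpow_neg hR0.le hR hs.1.le hα)
      _ ≤ _ := by rw [← mul_assoc, mul_right_comm C]; gcongr; exact le_add_self

/-- **Decoupling lemma.** If `μ` is a probability measure on `ℝ` with a bounded density
and compact support, then for every `s ∈ (0, 1/2)` there is a constant `D_s < ∞` such
that for all `α, β, γ ∈ ℂ`:
`∫ |x-α|^{-s} |x-γ|^s |x-β|^{-s} dμ(x)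
  ≤ D_s (∫ |x-γ|^s |x-β|^{-s} dμ(x)) (∫ |x-α|^{-s} dμ(x))`. -/
theorem decoupling_lemma
    (μ : Measure ℝ) (hprob : IsProbabilityMeasure μ)
    (ρ : ℝ → ℝ) (B : ℝ) (hρ0 : ∀ x, 0 ≤ ρ x) (hρB : ∀ x, ρ x ≤ B)
    (hμρ : μ = volume.withDensity (fun x => ENNReal.ofReal (ρ x)))
    (hK : ∃ K : Set ℝ, IsCompact K ∧ μ Kᶜ = 0)
    (s : ℝ) (hs : s ∈ Set.Ioo (0:ℝ) (1/2)) :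
    ∃ Ds : ℝ, ∀ α β γ : ℂ,
      ∫⁻ x, (‖(x:ℂ) - α‖₊ : ℝ≥0∞) ^ (-s) * (‖(x:ℂ) - γ‖₊ : ℝ≥0∞) ^ s *
          (‖(x:ℂ) - β‖₊ : ℝ≥0∞) ^ (-s) ∂μ ≤
        ENNReal.ofReal Ds *
          (∫⁻ x, (‖(x:ℂ) - γ‖₊ : ℝ≥0∞) ^ s * (‖(x:ℂ) - β‖₊ : ℝ≥0∞) ^ (-s) ∂μ) *
          (∫⁻ x, (‖(x:ℂ) - α‖₊ : ℝ≥0∞) ^ (-s) ∂μ) :=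
  decoupling_lemma_general μ hprob ρ B hρB hμρ hK s hs
end
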